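/- For γ > 0 and λ > 1 + √γ, setting ρ = λ(1 + γ/(λ−1)), a = (1−√γ)², b = (1+√γ)², one has ∫_a^b x·√((b−x)(x−a))/(2πγx·(ρ−x)²) dx = 1/((λ−1)² − γ). Equivalently, ∫ x/(ρ−x)² dF_γ(x) = 1/((λ−1)² − γ), where F_γ is the Marčenko–Pastur distribution with parameter γ ≤ 1. -/

import Mathlib

/-!
After cancelling `x`, the integral is `(2πγ)⁻¹ ∫_a^b √((b-x)(x-a)) / (ρ-x)² dx`. For any
`a < b < ρ` the substitution `t = √((x-a)/(b-x))` makes this integrand rational, giving the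
elementary primitive `primitiveSqrtDivSq`, and its one-sided limits at `a` and `b` evaluate the
integral as `π ((2ρ-a-b) / (2√((ρ-a)(ρ-b))) - 1)`. For the Marčenko–Pastur parameters,
`ρ - a = (λ-1+√γ)² / (λ-1)` and `ρ - b = (λ-1-√γ)² / (λ-1)`, so this equals `2πγ / ((λ-1)² - γ)`.
-/

open MeasureTheory intervalIntegral
open Real Filter Topology Set

section
variable {a b : ℝ}

theorem tendsto_sub_div_sub_nhdsLT_atTop (hab : a < b) :
    Tendsto (fun x => (x - a) / (b - x)) (𝓝[<] b) atTop := by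
  have hden : Tendsto (fun x => b - x) (𝓝[<] b) (𝓝[>] 0) := by
    refine tendsto_nhdsWithin_of_tendsto_nhds_of_eventually_within _ ?_ ?_
    · have : Tendsto (fun x => b - x) (𝓝 b) (𝓝 (b - b)) := (continuous_sub_left b).tendsto b
      simpa using this.mono_left nhdsWithin_le_nhds
    · filter_upwards [self_mem_nhdsWithin] with x hx using sub_pos.2 (mem_Iio.1 hx)
  have hnum : Tendsto (fun x => x - a) (𝓝[<] b) (𝓝 (b - a)) :=
    ((continuous_sub_right a).tendsto b).mono_left nhdsWithin_le_nhds
  simpa only [div_eq_mul_inv, Pi.inv_apply] using hnum.pos_mul_atTop (sub_pos.2 hab)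
    hden.inv_tendsto_nhdsGT_zero

theorem tendsto_arctan_mul_sqrt_sub_div_sub_nhdsLT (hab : a < b) {c : ℝ} (hc : 0 < c) :
    Tendsto (fun x => arctan (c * √((x - a) / (b - x)))) (𝓝[<] b) (𝓝 (π / 2)) :=
  (tendsto_arctan_atTop.mono_right nhdsWithin_le_nhds).comp
    ((tendsto_sqrt_atTop.comp (tendsto_sub_div_sub_nhdsLT_atTop hab)).const_mul_atTop hc)

theorem hasDerivAt_arctan_mul_sqrt_sub_div_sub {x : ℝ} (hx : x ∈ Ioo a b) (c : ℝ) :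
    HasDerivAt (fun y => arctan (c * √((y - a) / (b - y))))
      (c * (b - a) / (2 * √((b - x) * (x - a)) * ((b - x) + c ^ 2 * (x - a)))) x := by
  have hA : 0 < x - a := sub_pos.2 hx.1
  have hB : 0 < b - x := sub_pos.2 hx.2
  have hq : HasDerivAt (fun y => (y - a) / (b - y)) ((b - a) / (b - x) ^ 2) x := by
    refine (((hasDerivAt_id' x).sub_const a).fun_div ((hasDerivAt_id' x).const_sub b)
      hB.ne').congr_deriv ?_
    ring
  refine (((hq.sqrt (div_pos hA hB).ne').const_mul c).arctan).congr_deriv ?_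
  rw [sqrt_mul hB.le, sqrt_div hA.le]
  have hsA := sq_sqrt hA.le
  have hsB := sq_sqrt hB.le
  set A := √(x - a)
  set B := √(b - x)
  have : 0 < A := sqrt_pos.2 hA
  have : 0 < B := sqrt_pos.2 hB
  have : 0 < (b - x) + c ^ 2 * (x - a) := by positivity
  field_simp
  rw [← hsA, ← hsB]
  ring

theorem hasDerivAt_sqrt_mul_div_sub {x ρ : ℝ} (hx : x ∈ Ioo a b) (hxρ : x < ρ) :
    HasDerivAt (fun y => √((b - y) * (y - a)) / (ρ - y))
      ((a + b - 2 * x) / (2 * √((b - x) * (x - a)) * (ρ - x))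
        + √((b - x) * (x - a)) / (ρ - x) ^ 2) x := by
  have hg : HasDerivAt (fun y => (b - y) * (y - a)) (a + b - 2 * x) x := by
    refine (((hasDerivAt_id' x).const_sub b).mul ((hasDerivAt_id' x).sub_const a)).congr_deriv ?_
    ring
  have hpos : 0 < (b - x) * (x - a) := mul_pos (sub_pos.2 hx.2) (sub_pos.2 hx.1)
  refine ((hg.sqrt hpos.ne').fun_div ((hasDerivAt_id' x).const_sub ρ)
    (sub_pos.2 hxρ).ne').congr_deriv ?_
  have : 0 < √((b - x) * (x - a)) := sqrt_pos.2 hpos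
  have : 0 < ρ - x := sub_pos.2 hxρ
  field_simp
  ring

end

noncomputable def primitiveSqrtDivSq (a b ρ x : ℝ) : ℝ :=
  √((b - x) * (x - a)) / (ρ - x) - 2 * arctan √((x - a) / (b - x))
    + (2 * ρ - a - b) / √((ρ - a) * (ρ - b))
      * arctan (√((ρ - a) * (ρ - b)) / (ρ - a) * √((x - a) / (b - x)))

section
variable {a b ρ : ℝ}

theorem hasDerivAt_primitiveSqrtDivSq (hbρ : b < ρ) {x : ℝ} (hx : x ∈ Ioo a b) :
    HasDerivAt (primitiveSqrtDivSq a b ρ) (√((b - x) * (x - a)) / (ρ - x) ^ 2) x := by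
  have hxρ : x < ρ := hx.2.trans hbρ
  have h₁ := hasDerivAt_sqrt_mul_div_sub hx hxρ
  have h₂ := hasDerivAt_arctan_mul_sqrt_sub_div_sub hx 1
  simp only [one_pow, one_mul, sub_add_sub_cancel] at h₂
  have h₃ := hasDerivAt_arctan_mul_sqrt_sub_div_sub hx (√((ρ - a) * (ρ - b)) / (ρ - a))
  refine ((h₁.sub (h₂.const_mul 2)).add (h₃.const_mul _)).congr_deriv ?_
  have hρa : 0 < ρ - a := by linarith [hx.1, hx.2]
  have hρb : 0 < ρ - b := by linarith
  have hs := sq_sqrt (mul_pos hρa hρb).le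
  have : 0 < √((ρ - a) * (ρ - b)) := sqrt_pos.2 (mul_pos hρa hρb)
  have : 0 < √((b - x) * (x - a)) := sqrt_pos.2 (mul_pos (sub_pos.2 hx.2) (sub_pos.2 hx.1))
  have : 0 < ρ - x := sub_pos.2 hxρ
  set s := √((ρ - a) * (ρ - b))
  set r := √((b - x) * (x - a))
  have hκ : b - x + (s / (ρ - a)) ^ 2 * (x - a) = (b - a) * (ρ - x) / (ρ - a) := by
    rw [div_pow, hs]
    field_simp
    ring
  have : 0 < b - a := by linarith [hx.1, hx.2]
  rw [hκ]
  field_simp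
  ring

theorem tendsto_primitiveSqrtDivSq_nhdsGT (hab : a < b) (hbρ : b < ρ) :
    Tendsto (primitiveSqrtDivSq a b ρ) (𝓝[>] a) (𝓝 0) := by
  have hρa : ρ - a ≠ 0 := by linarith
  have hba : b - a ≠ 0 := by linarith
  have hcont : ContinuousAt (primitiveSqrtDivSq a b ρ) a := by
    unfold primitiveSqrtDivSq
    fun_prop (disch := assumption)
  simpa [primitiveSqrtDivSq] using hcont.tendsto.mono_left nhdsWithin_le_nhds

theorem tendsto_primitiveSqrtDivSq_nhdsLT (hab : a < b) (hbρ : b < ρ) :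
    Tendsto (primitiveSqrtDivSq a b ρ) (𝓝[<] b)
      (𝓝 (π * ((2 * ρ - a - b) / (2 * √((ρ - a) * (ρ - b))) - 1))) := by
  have hρb : ρ - b ≠ 0 := by linarith
  have hfirst : Tendsto (fun x => √((b - x) * (x - a)) / (ρ - x)) (𝓝[<] b) (𝓝 0) := by
    have hcont : ContinuousAt (fun x => √((b - x) * (x - a)) / (ρ - x)) b := by
      fun_prop (disch := assumption)
    simpa using hcont.tendsto.mono_left nhdsWithin_le_nhds
  have hs : 0 < √((ρ - a) * (ρ - b)) / (ρ - a) :=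
    div_pos (sqrt_pos.2 (mul_pos (by linarith) (by linarith))) (by linarith)
  have hlim : Tendsto (primitiveSqrtDivSq a b ρ) (𝓝[<] b)
      (𝓝 (0 - 2 * (π / 2) + (2 * ρ - a - b) / √((ρ - a) * (ρ - b)) * (π / 2))) := by
    have h₁ := tendsto_arctan_mul_sqrt_sub_div_sub_nhdsLT hab one_pos
    simp only [one_mul] at h₁
    exact (hfirst.sub (h₁.const_mul 2)).add
      ((tendsto_arctan_mul_sqrt_sub_div_sub_nhdsLT hab hs).const_mul _)
  convert hlim using 2
  ring

theorem integral_sqrt_mul_div_sub_sq (hab : a < b) (hbρ : b < ρ) :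
    ∫ x in a..b, √((b - x) * (x - a)) / (ρ - x) ^ 2
      = π * ((2 * ρ - a - b) / (2 * √((ρ - a) * (ρ - b))) - 1) := by
  have hint : IntervalIntegrable (fun x => √((b - x) * (x - a)) / (ρ - x) ^ 2) volume a b := by
    refine ContinuousOn.intervalIntegrable fun x hx => ContinuousAt.continuousWithinAt ?_
    rw [uIcc_of_le hab.le] at hx
    have : (ρ - x) ^ 2 ≠ 0 := pow_ne_zero 2 (by linarith [hx.2])
    fun_prop (disch := assumption)
  rw [integral_eq_sub_of_hasDerivAt_of_tendsto hab (fun x hx => hasDerivAt_primitiveSqrtDivSq hbρ hx)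
    hint (tendsto_primitiveSqrtDivSq_nhdsGT hab hbρ) (tendsto_primitiveSqrtDivSq_nhdsLT hab hbρ),
    sub_zero]

end

theorem integral_self_mul_div_const_mul_self_mul {a b : ℝ} (ha : 0 ≤ a) (hab : a ≤ b)
    (c : ℝ) (f g : ℝ → ℝ) :
    ∫ x in a..b, x * f x / (c * x * g x) = c⁻¹ * ∫ x in a..b, f x / g x := by
  rw [← intervalIntegral.integral_const_mul]
  refine integral_congr_ae (ae_of_all _ fun x hx => ?_)
  rw [uIoc_of_le hab] at hx
  have : x ≠ 0 := (ha.trans_lt hx.1).ne'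
  field_simp

theorem mp_integral_identity_general (γ lam ρ a b : ℝ) (hγ : 0 < γ)
    (hlam : 1 + Real.sqrt γ < lam)
    (hρ : ρ = lam * (1 + γ / (lam - 1)))
    (ha : a = (1 - Real.sqrt γ) ^ 2) (hb : b = (1 + Real.sqrt γ) ^ 2) :
    ∫ x in a..b,
        x * Real.sqrt ((b - x) * (x - a)) / (2 * Real.pi * γ * x * (ρ - x) ^ 2)
      = 1 / ((lam - 1) ^ 2 - γ) := by
  obtain ⟨g, hg, rfl⟩ : ∃ g, 0 < g ∧ γ = g ^ 2 := ⟨√γ, sqrt_pos.2 hγ, (sq_sqrt hγ.le).symm⟩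
  rw [sqrt_sq hg.le] at hlam ha hb
  have hu : 0 < lam - 1 := by linarith
  have hρa : ρ - a = (lam - 1 + g) ^ 2 / (lam - 1) := by
    rw [hρ, ha]; field_simp; ring
  have hρb : ρ - b = (lam - 1 - g) ^ 2 / (lam - 1) := by
    rw [hρ, hb]; field_simp; ring
  have hab : a < b := by rw [ha, hb]; nlinarith
  have hbρ : b < ρ := by
    have : 0 < ρ - b := hρb ▸ div_pos (pow_pos (by linarith) 2) hu
    linarith
  have hs : √((ρ - a) * (ρ - b)) = ((lam - 1) ^ 2 - g ^ 2) / (lam - 1) := by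
    rw [sqrt_eq_iff_mul_self_eq_of_pos (div_pos (by nlinarith) hu), hρa, hρb]
    field_simp
    ring
  have hsum : 2 * ρ - a - b = 2 * ((lam - 1) ^ 2 + g ^ 2) / (lam - 1) := by
    rw [hρ, ha, hb]; field_simp; ring
  rw [integral_self_mul_div_const_mul_self_mul (ha ▸ sq_nonneg _) hab.le,
    integral_sqrt_mul_div_sub_sq hab hbρ, hs, hsum]
  have : (lam - 1) ^ 2 - g ^ 2 ≠ 0 := by nlinarith
  field_simp
  ring

theorem mp_integral_identity (γ lam ρ a b : ℝ) (hγ : 0 < γ) (hγ1 : γ ≤ 1)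
    (hlam : 1 + Real.sqrt γ < lam)
    (hρ : ρ = lam * (1 + γ / (lam - 1)))
    (ha : a = (1 - Real.sqrt γ) ^ 2) (hb : b = (1 + Real.sqrt γ) ^ 2) :
    ∫ x in a..b,
        x * Real.sqrt ((b - x) * (x - a)) / (2 * Real.pi * γ * x * (ρ - x) ^ 2)
      = 1 / ((lam - 1) ^ 2 - γ) :=
  mp_integral_identity_general γ lam ρ a b hγ hlam hρ ha hb
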